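/- arXiv:math/0510015 — 3 statements merged into one kernel-verified Lean document; each statement's English description precedes it below -/
import Mathlib

section
/- Let G be a finite group satisfying property Pₙ (for every prime p, at most n−1 non-central conjugacy classes have representative order divisible by p), and let N be a normal subgroup of G. Then the quotient group G/N also satisfies property Pₙ. -/
/-- Property `Pₙ`: for every prime `p`, at most `n - 1` non-central conjugacy
classes have representative order divisible by `p`. -/
def propertyP (G : Type*) [Group G] (n : ℕ) : Prop :=
  ∀ p : ℕ, p.Prime →
    {c : ConjClasses G | ∃ x : G, c = ConjClasses.mk x ∧ x ∉ Subgroup.center G ∧ p ∣ orderOf x}.ncard ≤ n - 1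

theorem MonoidHom.map_mem_center_of_surjective {G H : Type*} [Group G] [Group H] {f : G →* H}
    (hf : Function.Surjective f) {x : G} (hx : x ∈ Subgroup.center G) :
    f x ∈ Subgroup.center H := by
  rw [Subgroup.mem_center_iff] at hx ⊢
  intro h
  obtain ⟨g, rfl⟩ := hf h
  rw [← map_mul, ← map_mul, hx g]

def noncentralClassesWithOrderDvd (G : Type*) [Group G] (p : ℕ) : Set (ConjClasses G) :=
  {c | ∃ x : G, c = ConjClasses.mk x ∧ x ∉ Subgroup.center G ∧ p ∣ orderOf x}

theorem noncentralClassesWithOrderDvd_subset_image {G H : Type*} [Group G] [Group H]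
    {f : G →* H} (hf : Function.Surjective f) (p : ℕ) :
    noncentralClassesWithOrderDvd H p ⊆
      ConjClasses.map f '' noncentralClassesWithOrderDvd G p := by
  rintro _ ⟨y, rfl, hy, hpy⟩
  obtain ⟨x, rfl⟩ := hf y
  exact ⟨ConjClasses.mk x,
    ⟨x, rfl, fun hx ↦ hy (f.map_mem_center_of_surjective hf hx),
      hpy.trans (orderOf_map_dvd f x)⟩, rfl⟩

theorem propertyP.of_surjective {G H : Type*} [Group G] [Group H] [Finite G] {n : ℕ} {f : G →* H}
    (hf : Function.Surjective f) (hP : propertyP G n) : propertyP H n := fun p hp ↦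
  calc (noncentralClassesWithOrderDvd H p).ncard
      ≤ (ConjClasses.map f '' noncentralClassesWithOrderDvd G p).ncard :=
        Set.ncard_le_ncard (noncentralClassesWithOrderDvd_subset_image hf p)
          ((Set.toFinite _).image _)
    _ ≤ (noncentralClassesWithOrderDvd G p).ncard := Set.ncard_image_le (Set.toFinite _)
    _ ≤ n - 1 := hP p hp

theorem stmt2 (G : Type*) [Group G] [Finite G] (n : ℕ)
    (N : Subgroup G) [N.Normal] (hP : propertyP G n) :
    propertyP (G ⧸ N) n :=
  propertyP.of_surjective (QuotientGroup.mk'_surjective N) hP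
end

section
/- Let G be a finite group and suppose G/(G'Z(G)) has an element of order p for a prime p. Then G has at least p−1 non-central conjugacy classes whose representative's order is divisible by p. -/
theorem stmt11 (G : Type*) [Group G] [Finite G]
    (M : Subgroup G) [M.Normal]
    (hM : M = commutator G ⊔ Subgroup.center G)
    (p : ℕ) (hp : p.Prime) (h : ∃ y : G ⧸ M, orderOf y = p) :
    p - 1 ≤ {c : ConjClasses G |
      ∃ x : G, c = ConjClasses.mk x ∧ x ∉ Subgroup.center G ∧ p ∣ orderOf x}.ncard := by
  obtain ⟨y, hy⟩ := h
  obtain ⟨x, rfl⟩ := QuotientGroup.mk_surjective y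
  set S := {c : ConjClasses G |
      ∃ x : G, c = ConjClasses.mk x ∧ x ∉ Subgroup.center G ∧ p ∣ orderOf x} with hS
  have hcomm : commutator G ≤ M := hM ▸ le_sup_left
  have hcent : Subgroup.center G ≤ M := hM ▸ le_sup_right
  have key : ∀ i : ℕ, i + 1 < p → ConjClasses.mk (x ^ (i + 1)) ∈ S := by
    intro i hi
    refine ⟨x ^ (i + 1), rfl, ?_, ?_⟩
    · intro hc
      have h1 : ((x : G ⧸ M)) ^ (i + 1) = 1 := by
        rw [← QuotientGroup.mk_pow]
        exact (QuotientGroup.eq_one_iff _).2 (hcent hc)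
      have h2 := orderOf_dvd_of_pow_eq_one h1
      rw [hy] at h2
      have := Nat.le_of_dvd (Nat.succ_pos i) h2
      omega
    · have h1 : orderOf ((x : G ⧸ M) ^ (i + 1)) ∣ orderOf (x ^ (i + 1)) := by
        rw [← QuotientGroup.mk_pow]
        exact orderOf_map_dvd (QuotientGroup.mk' M) _
      have hcop : Nat.gcd (orderOf (x : G ⧸ M)) (i + 1) = 1 := by
        rw [hy]
        exact (hp.coprime_iff_not_dvd.mpr
          (fun hd => by have := Nat.le_of_dvd (by omega) hd; omega)).gcd_eq_one
      have h2 : orderOf ((x : G ⧸ M) ^ (i + 1)) = p := by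
        rw [orderOf_pow, hcop, Nat.div_one, hy]
      rw [← h2]
      exact h1
  have hle : Nat.card (Fin (p - 1)) ≤ Nat.card S := by
    have hinj : Function.Injective
        (fun i : Fin (p - 1) => (⟨ConjClasses.mk (x ^ (i.1 + 1)),
          key i.1 (by omega)⟩ : S)) := by
      intro i j hij
      have hmk : ConjClasses.mk (x ^ (i.1 + 1)) = ConjClasses.mk (x ^ (j.1 + 1)) :=
        congrArg Subtype.val hij
      rw [ConjClasses.mk_eq_mk_iff_isConj, isConj_iff] at hmk
      obtain ⟨c, hc⟩ := hmk
      have hmem : x ^ (j.1 + 1) * (x ^ (i.1 + 1))⁻¹ ∈ M := by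
        apply hcomm
        rw [← hc]
        open scoped commutatorElement in
        have : c * x ^ (i.1 + 1) * c⁻¹ * (x ^ (i.1 + 1))⁻¹ = ⁅c, x ^ (i.1 + 1)⁆ := by
          group
        rw [this]
        rw [commutator_def]
        exact Subgroup.commutator_mem_commutator (Subgroup.mem_top c) (Subgroup.mem_top _)
      have heq : ((x : G ⧸ M)) ^ (j.1 + 1) = ((x : G ⧸ M)) ^ (i.1 + 1) := by
        rw [← QuotientGroup.mk_pow, ← QuotientGroup.mk_pow]
        exact (QuotientGroup.eq_iff_div_mem.mpr (by
          simpa [div_eq_mul_inv] using hmem)).symm ▸ rfl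
      have hinjpow := pow_injOn_Iio_orderOf (x := (x : G ⧸ M))
      have hi' : i.1 + 1 ∈ Set.Iio (orderOf (x : G ⧸ M)) := by
        rw [hy]; exact Set.mem_Iio.mpr (by omega)
      have hj' : j.1 + 1 ∈ Set.Iio (orderOf (x : G ⧸ M)) := by
        rw [hy]; exact Set.mem_Iio.mpr (by omega)
      have := hinjpow hj' hi' heq
      exact Fin.ext (by omega)
    exact Nat.card_le_card_of_injective _ hinj
  simpa [Nat.card_coe_set_eq] using hle
end

section
/- Let G be a finite group satisfying property P₄ with G'Z(G) a proper subgroup of G. Then every prime divisor of |G/(G'Z(G))| is 2 or 3, and |G/(G'Z(G))| ∈ {2, 3, 4}. -/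
open scoped commutatorElement

theorem stmt12 (G : Type*) [Group G] [Finite G] (hP : propertyP G 4)
    (M : Subgroup G) [M.Normal]
    (hM : M = commutator G ⊔ Subgroup.center G) (hlt : M ≠ ⊤) :
    (∀ p : ℕ, p.Prime → p ∣ Nat.card (G ⧸ M) → p = 2 ∨ p = 3) ∧
    Nat.card (G ⧸ M) ∈ ({2, 3, 4} : Set ℕ) := by
  classical
  set A := G ⧸ M with hAdef
  haveI : Finite (ConjClasses G) := Quotient.finite _
  haveI hAfin : Finite A := Quotient.finite _
  -- commutators lie in M
  have hcommM : ∀ x y : G, ⁅x, y⁆ ∈ M := by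
    intro x y
    rw [hM]
    exact Subgroup.mem_sup_left
      (Subgroup.commutator_mem_commutator (Subgroup.mem_top _) (Subgroup.mem_top _))
  have hZle : Subgroup.center G ≤ M := by rw [hM]; exact le_sup_right
  -- conjugation is trivial in the quotient
  have hconj : ∀ x g : G, ((g * x * g⁻¹ : G) : A) = (x : A) := by
    intro x g
    rw [eq_comm, QuotientGroup.eq]
    have h : x⁻¹ * (g * x * g⁻¹) = ⁅x⁻¹, g⁆ := by group
    rw [h]; exact hcommM _ _
  -- the quotient is commutative
  have hcomm : ∀ a b : A, a * b = b * a := by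
    intro a b
    induction a using QuotientGroup.induction_on with
    | H x =>
    induction b using QuotientGroup.induction_on with
    | H y =>
    show ((x * y : G) : A) = ((y * x : G) : A)
    rw [QuotientGroup.eq]
    have h : (x * y)⁻¹ * (y * x) = ⁅y⁻¹, x⁻¹⁆ := by group
    rw [h]; exact hcommM _ _
  -- key counting bound
  have key : ∀ p : ℕ, p.Prime → {a : A | p ∣ orderOf a}.ncard ≤ 3 := by
    intro p hp
    have hSle := hP p hp
    have hne1 : ∀ a : A, p ∣ orderOf a → a ≠ 1 := by
      intro a hpa h1
      rw [h1, orderOf_one] at hpa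
      exact hp.ne_one (Nat.dvd_one.mp hpa)
    refine le_trans (Set.ncard_le_ncard_of_injOn (fun a => ConjClasses.mk a.out) ?_ ?_
      (Set.toFinite _)) hSle
    · rintro a hpa
      have hout : ((a.out : G) : A) = a := QuotientGroup.out_eq' a
      refine ⟨a.out, rfl, ?_, ?_⟩
      · intro hc
        have hmem : a.out ∈ M := hZle hc
        have h1 : ((a.out : G) : A) = 1 := (QuotientGroup.eq_one_iff _).mpr hmem
        exact hne1 a hpa (by rw [← hout, h1])
      · have h1 : orderOf ((a.out : G) : A) ∣ orderOf a.out :=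
          orderOf_map_dvd (QuotientGroup.mk' M) a.out
        rw [hout] at h1
        exact dvd_trans hpa h1
    · intro a ha b hb hab
      obtain ⟨g, hg⟩ := isConj_iff.mp (ConjClasses.mk_eq_mk_iff_isConj.mp hab)
      have h1 : ((g * a.out * g⁻¹ : G) : A) = ((b.out : G) : A) := by rw [hg]
      rw [hconj] at h1
      rw [← QuotientGroup.out_eq' a, ← QuotientGroup.out_eq' b]
      exact h1
  -- the quotient is nontrivial
  have hA2 : 2 ≤ Nat.card A := by
    have hnall : ¬ ∀ x : G, x ∈ M := fun h => hlt ((Subgroup.eq_top_iff' M).mpr h)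
    obtain ⟨x, hx⟩ := not_forall.mp hnall
    have hx1 : (x : A) ≠ 1 := fun h => hx ((QuotientGroup.eq_one_iff _).mp h)
    have : Nontrivial A := ⟨_, _, hx1⟩
    exact Finite.one_lt_card_iff_nontrivial.mpr this
  -- for each prime divisor p of |A|, an "order prime to p" subgroup of controlled size
  have main : ∀ p : ℕ, p.Prime → p ∣ Nat.card A →
      ∃ d : ℕ, d ∣ Nat.card A ∧ ¬ p ∣ d ∧ Nat.card A - d ≤ 3 ∧ 0 < d := by
    intro p hp hpn
    haveI : Fact p.Prime := ⟨hp⟩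
    have hplcm : ∀ m n : ℕ, ¬ p ∣ m → ¬ p ∣ n → ¬ p ∣ Nat.lcm m n := by
      intro m n hm hn hl
      rcases (Nat.Prime.dvd_mul hp).mp (hl.trans (Nat.lcm_dvd_mul m n)) with h | h
      exacts [hm h, hn h]
    set H : Subgroup A :=
      { carrier := {a : A | ¬ p ∣ orderOf a}
        one_mem' := by
          simp only [Set.mem_setOf_eq, orderOf_one, Nat.dvd_one]
          exact hp.ne_one
        inv_mem' := by intro a ha; simpa only [Set.mem_setOf_eq, orderOf_inv] using ha
        mul_mem' := by
          intro a b ha hb hab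
          exact hplcm _ _ ha hb
            (hab.trans (Commute.orderOf_mul_dvd_lcm (hcomm a b))) } with hH
    have hHcoe : (H : Set A) = {a : A | ¬ p ∣ orderOf a} := rfl
    refine ⟨Nat.card H, Subgroup.card_subgroup_dvd_card H, ?_, ?_, Nat.card_pos⟩
    · intro hpH
      haveI : Fintype H := Fintype.ofFinite H
      have hpH' : p ∣ Fintype.card H := by rwa [← Nat.card_eq_fintype_card]
      obtain ⟨h, hh⟩ := exists_prime_orderOf_dvd_card p hpH'
      have horder : orderOf (H.subtype h) = orderOf h :=
        orderOf_injective H.subtype H.subtype_injective h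
      have hmem : ¬ p ∣ orderOf ((h : A)) := h.2
      exact hmem (by rw [show ((h : A)) = H.subtype h from rfl, horder, hh])
    · have hcompl : {a : A | p ∣ orderOf a} = (H : Set A)ᶜ := by
        ext a; simp [hHcoe]
      have hsum : (H : Set A).ncard + (H : Set A)ᶜ.ncard = Nat.card A :=
        Set.ncard_add_ncard_compl _
      have hcardH : (H : Set A).ncard = Nat.card H := by
        rw [← Nat.card_coe_set_eq]; rfl
      have hkey := key p hp
      rw [hcompl] at hkey
      omega
  -- Part 1: prime divisors are 2 or 3
  have part1 : ∀ p : ℕ, p.Prime → p ∣ Nat.card A → p = 2 ∨ p = 3 := by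
    intro p hp hpn
    obtain ⟨d, hdn, hpd, hd3, hdpos⟩ := main p hp hpn
    obtain ⟨k, hk⟩ := hdn
    have hpk : p ∣ k := ((Nat.Prime.dvd_mul hp).mp (hk ▸ hpn)).resolve_left hpd
    have hkpos : 0 < k := Nat.pos_of_ne_zero (by rintro rfl; rw [mul_zero] at hk; omega)
    have hkp : p ≤ k := Nat.le_of_dvd hkpos hpk
    have h1 : k - 1 ≤ Nat.card A - d := by
      calc k - 1 ≤ d * (k - 1) := Nat.le_mul_of_pos_left _ hdpos
        _ = d * k - d := by rw [Nat.mul_sub, mul_one]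
        _ = Nat.card A - d := by rw [← hk]
    have hp2 := hp.two_le
    have hple : p ≤ 4 := by omega
    interval_cases p
    · exact Or.inl rfl
    · exact Or.inr rfl
    · exact absurd hp (by decide)
  refine ⟨part1, ?_⟩
  -- Part 2: the order is 2, 3, or 4
  have hmem : Nat.card A = 2 ∨ Nat.card A = 3 ∨ Nat.card A = 4 := by
    by_cases h2 : 2 ∣ Nat.card A
    · by_cases h3 : 3 ∣ Nat.card A
      · -- both 2 and 3 divide: impossible
        exfalso
        obtain ⟨d2, hd2n, h2d2, hd23, hd2pos⟩ := main 2 Nat.prime_two h2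
        obtain ⟨k, hk⟩ := hd2n
        have hk2 : 2 ≤ k := by
          rcases Nat.lt_or_ge k 2 with h | h
          · interval_cases k
            · omega
            · exfalso; exact h2d2 (by omega)
          · exact h
        have h2d : 2 * d2 ≤ Nat.card A := by
          calc 2 * d2 ≤ k * d2 := Nat.mul_le_mul_right _ hk2
            _ = Nat.card A := by rw [hk, mul_comm]
        have hn6 : Nat.card A = 6 := by omega
        obtain ⟨d3, hd3n, h3d3, hd33, hd3pos⟩ := main 3 Nat.prime_three h3
        rw [hn6] at hd3n hd33
        have hd36 : d3 ≤ 6 := Nat.le_of_dvd (by norm_num) hd3n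
        interval_cases d3 <;> omega
      · -- only 2 divides: d2 = 1, card ∈ {2, 4}
        obtain ⟨d2, hd2n, h2d2, hd23, hd2pos⟩ := main 2 Nat.prime_two h2
        have hd21 : d2 = 1 := by
          by_contra hne
          obtain ⟨q, hq, hqd⟩ := Nat.exists_prime_and_dvd hne
          rcases part1 q hq (hqd.trans hd2n) with h | h
          · exact h2d2 (h ▸ hqd)
          · exact h3 (h ▸ hqd.trans hd2n)
        omega
    · by_cases h3 : 3 ∣ Nat.card A
      · -- only 3 divides: d3 = 1, card = 3
        obtain ⟨d3, hd3n, h3d3, hd33, hd3pos⟩ := main 3 Nat.prime_three h3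
        have hd31 : d3 = 1 := by
          by_contra hne
          obtain ⟨q, hq, hqd⟩ := Nat.exists_prime_and_dvd hne
          rcases part1 q hq (hqd.trans hd3n) with h | h
          · exact h2 (h ▸ hqd.trans hd3n)
          · exact h3d3 (h ▸ hqd)
        omega
      · -- no prime divides: impossible since card ≥ 2
        exfalso
        obtain ⟨q, hq, hqd⟩ := Nat.exists_prime_and_dvd (show Nat.card A ≠ 1 by omega)
        rcases part1 q hq hqd with h | h
        · exact h2 (h ▸ hqd)
        · exact h3 (h ▸ hqd)
  simp only [Set.mem_insert_iff, Set.mem_singleton_iff]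
  omega
end
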